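/- Let T, n be positive integers with 2T ≤ n and let ε, δ > 0. Let (x_t)_{t≥0} be a sequence in ℂ^n and let (x̃_t)_{t≥0} be a T-periodic sequence in ℂ^n (x̃_{t+T} = x̃_t) such that ‖x_t − x̃_t‖₂ ≤ ε for all t ≥ 0, and suppose x̃_0, …, x̃_{T−1} are nonzero and linearly independent. Then there exist a matrix V̂ ∈ ℂ^{n×T} with V̂^*V̂ = 1_T, orthogonal projections K̂, T̂ ∈ ℂ^{n×n}, and polynomials p_0, …, p_{T−1} ∈ ℂ[z] such that ‖x_t − K̂ V̂ p_{t mod T}(C_T) V̂^* T̂ x̃_0‖₂ ≤ ε for every t ≥ 0, where C_T ∈ ℂ^{T×T} is the cyclic shift matrix (so that C_T^T = 1_T and k ↦ C_T^k is a unitary representation of ℤ/T). -/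

import Mathlib

open Matrix Polynomial BigOperators
open Fin.NatCast InnerProductSpace

set_option maxHeartbeats 1000000

/-- The Euclidean norm `‖x‖₂ = √(Σ_i ‖x_i‖²)` on `ℂ^n`. -/
noncomputable def enorm2 {n : ℕ} (x : Fin n → ℂ) : ℝ :=
  Real.sqrt (∑ i, ‖x i‖ ^ 2)

/-- The `T × T` cyclic shift (permutation) matrix `C_T`, with `C_T ê_j = ê_{j+1 mod T}`. -/
def cShift (T : ℕ) [NeZero T] : Matrix (Fin T) (Fin T) ℂ :=
  Matrix.of fun i j => if i = j + 1 then 1 else 0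

section cShiftLemmas

variable {T : ℕ} [NeZero T]

lemma cShift_ct_mul : (cShift T)ᴴ * cShift T = 1 := by
  ext i j
  simp [Matrix.mul_apply, cShift, Matrix.conjTranspose_apply, Matrix.one_apply,
    apply_ite (star : ℂ → ℂ), ite_mul, Finset.sum_ite_eq, Finset.sum_ite_eq',
    add_left_inj, eq_comm]

lemma cShift_pow (m : ℕ) :
    (cShift T) ^ m = Matrix.of fun i j => if i = j + (m : Fin T) then 1 else 0 := by
  induction m with
  | zero => ext i j; simp [Matrix.one_apply]
  | succ m ih =>
    ext i j
    rw [pow_succ, ih]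
    simp only [Matrix.mul_apply, Matrix.of_apply, cShift, mul_ite, mul_one, mul_zero,
      Finset.sum_ite_eq', Finset.mem_univ, if_true]
    have : j + 1 + (m : Fin T) = j + ((m + 1 : ℕ) : Fin T) := by push_cast; abel
    rw [this]

lemma cShift_pow_T : (cShift T) ^ T = 1 := by
  rw [cShift_pow]; ext i j
  simp [Matrix.one_apply, Fin.natCast_self]

lemma cShift_pow_mulVec (m : ℕ) :
    ((cShift T) ^ m).mulVec (Pi.single 0 1) = Pi.single ((m : Fin T)) (1 : ℂ) := by
  rw [cShift_pow]
  ext i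
  simp [Matrix.mulVec, dotProduct, Pi.single_apply, Finset.sum_ite_eq',
    mul_ite, mul_one, mul_zero]

lemma cShift_pow_mulVec' (m : ℕ) (a : ℂ) :
    ((cShift T) ^ m).mulVec (fun j => if j = 0 then a else 0)
      = fun i => if i = (m : Fin T) then a else 0 := by
  rw [cShift_pow]
  ext i
  simp [Matrix.mulVec, dotProduct, Finset.sum_ite_eq', mul_ite, mul_one, mul_zero,
    ite_mul, zero_mul, one_mul]

omit [NeZero T] in
lemma sum_mulVec {ι : Type*} (s : Finset ι) (M : ι → Matrix (Fin T) (Fin T) ℂ)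
    (v : Fin T → ℂ) : (∑ j ∈ s, M j).mulVec v = ∑ j ∈ s, (M j).mulVec v := by
  ext i
  simp [Matrix.mulVec, dotProduct, Finset.sum_apply, Matrix.sum_apply,
    Finset.sum_mul]
  rw [Finset.sum_comm]

end cShiftLemmas

/-- let `2T ≤ n`, `ε, δ > 0`, `(x_t)` a sequence in `ℂ^n` and `(x̃_t)` a
`T`-periodic sequence with `‖x_t − x̃_t‖₂ ≤ ε` for all `t`, where `x̃_0,…,x̃_{T−1}` are
nonzero and linearly independent. Then there exist `V̂ ∈ ℂ^{n×T}` with `V̂^*V̂ = 1_T`,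
orthogonal projections `K̂, T̂`, and polynomials `p_0,…,p_{T−1}` such that
`‖x_t − K̂ V̂ p_{t mod T}(C_T) V̂^* T̂ x̃_0‖₂ ≤ ε` for every `t ≥ 0`, where `C_T` is the
cyclic shift matrix (unitary with `C_T^T = 1_T`, giving a unitary representation of `ℤ/T`):
the system is `(ℤ/T, ε)`-controlled. -/
theorem stmt_16 (T n : ℕ) [NeZero T] [NeZero n] (h2T : 2 * T ≤ n)
    (ε δ : ℝ) (hε : 0 < ε) (hδ : 0 < δ)
    (x xt : ℕ → Fin n → ℂ)
    (hper : ∀ t, xt (t + T) = xt t)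
    (hclose : ∀ t, enorm2 (x t - xt t) ≤ ε)
    (hnz : ∀ k : Fin T, xt k ≠ 0)
    (hli : LinearIndependent ℂ fun k : Fin T => xt k) :
    (cShift T)ᴴ * cShift T = 1 ∧ cShift T * (cShift T)ᴴ = 1 ∧ cShift T ^ T = 1 ∧
    ∃ (Vhat : Matrix (Fin n) (Fin T) ℂ) (Khat That : Matrix (Fin n) (Fin n) ℂ)
      (p : Fin T → ℂ[X]),
      Vhatᴴ * Vhat = 1 ∧
      Khat * Khat = Khat ∧ Khatᴴ = Khat ∧
      That * That = That ∧ Thatᴴ = That ∧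
      ∀ t : ℕ,
        enorm2 (x t -
          (Khat * (Vhat *
            aeval (cShift T) (p ⟨t % T, Nat.mod_lt t (Nat.pos_of_ne_zero (NeZero.ne T))⟩) *
            Vhatᴴ) * That).mulVec (xt 0)) ≤ ε := by
  classical
  refine ⟨cShift_ct_mul, mul_eq_one_comm.mp cShift_ct_mul, cShift_pow_T, ?_⟩
  -- periodicity modulo T
  have hmod : ∀ t, xt t = xt (t % T) := by
    intro t
    induction t using Nat.strong_induction_on with
    | _ t ih =>
      rcases lt_or_ge t T with h | h
      · rw [Nat.mod_eq_of_lt h]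
      · obtain ⟨s, rfl⟩ : ∃ s, t = s + T := ⟨t - T, (Nat.sub_add_cancel h).symm⟩
        rw [hper s, Nat.add_mod_right]
        exact ih s (by have := Nat.pos_of_ne_zero (NeZero.ne T); omega)
  -- Euclidean space setup
  let y : Fin T → EuclideanSpace ℂ (Fin n) := fun k => WithLp.toLp 2 (xt k)
  have hliE : LinearIndependent ℂ y :=
    hli.map' (WithLp.linearEquiv 2 ℂ (Fin n → ℂ)).symm.toLinearMap (LinearEquiv.ker _)
  have hy0 : y 0 ≠ 0 := fun h => hnz 0 (congrArg WithLp.ofLp h)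
  set r : ℝ := ‖y 0‖ with hr
  have hrpos : 0 < r := norm_pos_iff.mpr hy0
  have hrC : (r : ℂ) ≠ 0 := by exact_mod_cast hrpos.ne'
  -- Gram-Schmidt orthonormalization of the x̃'s
  haveI : WellFoundedLT (Fin T) := inferInstance
  let g : Fin T → EuclideanSpace ℂ (Fin n) := gramSchmidtNormed ℂ y
  have hg : Orthonormal ℂ g := gramSchmidtNormed_orthonormal hliE
  have hspan : Submodule.span ℂ (Set.range g) = Submodule.span ℂ (Set.range y) :=
    (span_gramSchmidtNormed_range y).trans (span_gramSchmidt ℂ y)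
  have hgs0 : gramSchmidt ℂ y 0 = y 0 := by
    have hbot : (⊥ : Fin T) = 0 := rfl
    rw [← hbot]
    rw [gramSchmidt_def]; simp
  have hg0 : g 0 = (r : ℂ)⁻¹ • y 0 := by
    show gramSchmidtNormed ℂ y 0 = (r : ℂ)⁻¹ • y 0
    rw [gramSchmidtNormed, hgs0, hr]
    norm_cast
  -- inner products with y 0
  have hin0 : ∀ j : Fin T, (inner ℂ (g j) (y 0) : ℂ) = if j = 0 then (r : ℂ) else 0 := by
    intro j
    by_cases hj : j = 0
    · subst hj
      rw [if_pos rfl, hg0, inner_smul_left]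
      rw [inner_self_eq_norm_sq_to_K, ← hr]
      have : (starRingEnd ℂ) ((r : ℂ)⁻¹) = (r : ℂ)⁻¹ := by
        rw [map_inv₀, Complex.conj_ofReal]
      rw [this]
      field_simp
      ring
      rfl
    · rw [if_neg hj]
      have hjpos : (0 : Fin T) < j := by
        rw [Fin.lt_def]
        exact Fin.lt_def.mp (Fin.pos_iff_ne_zero.mpr hj)
      show (inner ℂ (gramSchmidtNormed ℂ y j) (y 0) : ℂ) = 0
      rw [gramSchmidtNormed, inner_smul_left, gramSchmidt_inv_triangular ℂ y hjpos,
        mul_zero]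
  -- the matrix of the orthonormal family
  let Vhat : Matrix (Fin n) (Fin T) ℂ := Matrix.of fun i j => g j i
  have hVV : Vhatᴴ * Vhat = 1 := by
    ext j k
    have h2 : (∑ i, (starRingEnd ℂ) (g j i) * g k i) = if j = k then 1 else 0 := by
      simpa [PiLp.inner_apply, RCLike.inner_apply, mul_comm] using orthonormal_iff_ite.mp hg j k
    simpa [Matrix.mul_apply, Matrix.conjTranspose_apply, Vhat, Matrix.one_apply,
      RCLike.star_def] using h2
  -- the polynomials
  let c : Fin T → Fin T → ℂ := fun k j => (inner ℂ (g j) (y k) : ℂ) / (r : ℂ)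
  let p : Fin T → ℂ[X] := fun k => ∑ j : Fin T, Polynomial.C (c k j) * X ^ (j : ℕ)
  refine ⟨Vhat, 1, 1, p, hVV, by simp, by simp, by simp, by simp, ?_⟩
  intro t
  set k : Fin T := ⟨t % T, Nat.mod_lt t (Nat.pos_of_ne_zero (NeZero.ne T))⟩ with hk
  have hxtk : xt t = y k := by
    show xt t = xt ((k : ℕ))
    rw [hmod t]
  have hxt0 : xt 0 = y 0 := by
    show xt 0 = xt (((0 : Fin T) : ℕ))
    norm_num
  -- step 1 : Vhatᴴ (xt 0) = r • e_0
  have hw : Matrix.mulVec Vhatᴴ (xt 0) = fun j => if j = 0 then (r : ℂ) else 0 := by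
    ext j
    have h4 := hin0 j
    simp only [PiLp.inner_apply, RCLike.inner_apply] at h4
    rw [hxt0]
    simpa [Matrix.mulVec, dotProduct, Matrix.conjTranspose_apply, Vhat,
      RCLike.star_def, mul_comm] using h4
  -- step 2 : aeval of the polynomial
  have hA : aeval (cShift T) (p k) = ∑ j : Fin T, c k j • (cShift T) ^ (j : ℕ) := by
    simp [p, Algebra.algebraMap_eq_smul_one, smul_mul_assoc]
  -- step 3
  have hz : (aeval (cShift T) (p k)).mulVec (Matrix.mulVec Vhatᴴ (xt 0))
      = fun j => (inner ℂ (g j) (y k) : ℂ) := by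
    rw [hw, hA, _root_.sum_mulVec]
    ext j'
    have hterm : ∀ j : Fin T, (c k j • (cShift T) ^ (j : ℕ)).mulVec
          (fun j0 => if j0 = 0 then (r : ℂ) else 0)
        = fun i => c k j * (if i = j then (r : ℂ) else 0) := by
      intro j
      rw [Matrix.smul_mulVec, cShift_pow_mulVec' (j : ℕ) (r : ℂ),
        Fin.cast_val_eq_self]
      rfl
    simp only [hterm, Finset.sum_apply, mul_ite, mul_one, mul_zero,
      Finset.sum_ite_eq, Finset.mem_univ, if_true]
    show c k j' * (r : ℂ) = _
    rw [show c k j' = (inner ℂ (g j') (y k) : ℂ) / (r : ℂ) from rfl,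
      div_mul_cancel₀ _ hrC]
  -- step 4 : reconstruct y k
  have hmem : y k ∈ Submodule.span ℂ (Set.range g) := by
    rw [hspan]; exact Submodule.subset_span ⟨k, rfl⟩
  obtain ⟨a, ha⟩ := Submodule.mem_span_range_iff_exists_fun ℂ |>.mp hmem
  have hak : ∀ j, (inner ℂ (g j) (y k) : ℂ) = a j := by
    intro j
    have h5 := hg.inner_right_fintype a j
    rw [ha] at h5
    exact h5
  have hsum2 : (∑ j, (inner ℂ (g j) (y k) : ℂ) • g j) = y k :=
    (Finset.sum_congr rfl fun j _ => by rw [hak j]).trans ha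
  have hfin : ∀ i : Fin n, (∑ j, (inner ℂ (g j) (y k) : ℂ) • g j) i
      = ∑ j, (inner ℂ (g j) (y k) : ℂ) * g j i := fun i => by
    simp
  have hVz : Vhat.mulVec (fun j => (inner ℂ (g j) (y k) : ℂ)) = xt t := by
    rw [hxtk]
    ext i
    show ∑ j, Vhat i j * (inner ℂ (g j) (y k) : ℂ) = y k i
    calc ∑ j, Vhat i j * (inner ℂ (g j) (y k) : ℂ)
        = ∑ j, (inner ℂ (g j) (y k) : ℂ) * g j i :=
          Finset.sum_congr rfl fun j _ => mul_comm _ _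
      _ = (∑ j, (inner ℂ (g j) (y k) : ℂ) • g j) i := (hfin i).symm
      _ = y k i := by rw [hsum2]
  have key : (Vhat * aeval (cShift T) (p k) * Vhatᴴ).mulVec (xt 0) = xt t := by
    rw [← Matrix.mulVec_mulVec, ← Matrix.mulVec_mulVec, hz, hVz]
  rw [Matrix.one_mul, Matrix.mul_one, key]
  simpa using hclose t
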